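/- arXiv:1712.07755 — 2 statements merged into one kernel-verified Lean document; each statement's English description precedes it below -/
import Mathlib

section
/- Let d ≥ 1, let B be a hyperbolic invertible linear endomorphism of ℂ^d with |det B| = 1, let D be an invertible linear endomorphism of ℂ^d, and set C = D ∘ B ∘ D⁻¹. Then D maps the stable subspace of B onto the unstable subspace of C⁻¹, i.e., D(E^s(B)) = E^u(C⁻¹), and moreover D(E^s(B)) ⊔ E^u(C⁻¹) ≠ ℂ^d; in particular D(E^s(B)) and E^u(C⁻¹) do not span ℂ^d (transversality fails). -/
/-!
Conjugation by `D` carries the generalized eigenspaces of `B⁻¹` onto those of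
`C⁻¹ = D B⁻¹ D⁻¹`, and inversion exchanges the generalized eigenspaces of `B` for `μ` and of `B⁻¹`
for `μ⁻¹`. Hence `E^u(C⁻¹) = D(E^u(B⁻¹)) = D(E^s(B))`, and the supremum in question is just
`D(E^s(B))`. This is a proper subspace: the eigenvalues of `B` multiply to `det B`, of modulus one,
so some eigenvalue has modulus at least one, and its generalized eigenspace is independent of
`E^s(B)`.
-/

/-- The stable subspace of a linear endomorphism of `ℂ^d`: the supremum of the maximal
generalized eigenspaces for eigenvalues of modulus `< 1`. -/
noncomputable def stableSubspace {d : ℕ} (T : Module.End ℂ (Fin d → ℂ)) :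
    Submodule ℂ (Fin d → ℂ) :=
  ⨆ (μ : ℂ) (_ : ‖μ‖ < 1), T.maxGenEigenspace μ

/-- The unstable subspace of a linear endomorphism of `ℂ^d`: the supremum of the maximal
generalized eigenspaces for eigenvalues of modulus `> 1`. -/
noncomputable def unstableSubspace {d : ℕ} (T : Module.End ℂ (Fin d → ℂ)) :
    Submodule ℂ (Fin d → ℂ) :=
  ⨆ (μ : ℂ) (_ : 1 < ‖μ‖), T.maxGenEigenspace μ

/-- A linear endomorphism is hyperbolic if it is invertible and has no eigenvalue of
modulus one. -/
def IsHyperbolic {d : ℕ} (T : Module.End ℂ (Fin d → ℂ)) : Prop :=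
  IsUnit T ∧ ∀ μ : ℂ, T.HasEigenvalue μ → ‖μ‖ ≠ 1

namespace Module.End

theorem maxGenEigenspace_conj {R M M₂ : Type*} [CommRing R] [AddCommGroup M] [Module R M]
    [AddCommGroup M₂] [Module R M₂] (e : M ≃ₗ[R] M₂) (f : End R M) (μ : R) :
    (e.conj f).maxGenEigenspace μ = (f.maxGenEigenspace μ).map e.toLinearMap := by
  have hpow (k : ℕ) : (e.conj f - μ • 1) ^ k = e.conj ((f - μ • 1) ^ k) := by
    -- `LinearEquiv.conj` is only linear; its multiplicative version `conjAlgEquiv` is defeq.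
    change (e.conjAlgEquiv R f - μ • 1) ^ k = e.conjAlgEquiv R ((f - μ • 1) ^ k)
    simp only [map_pow, map_sub, map_smul, map_one]
  ext x
  simp [mem_maxGenEigenspace, Submodule.mem_map_equiv, hpow]

theorem maxGenEigenspace_zero_eq_bot {R M : Type*} [CommRing R] [AddCommGroup M] [Module R M]
    (e : M ≃ₗ[R] M) : maxGenEigenspace (e : End R M) 0 = ⊥ := by
  refine eq_bot_iff.mpr fun x hx => ?_
  obtain ⟨k, hk⟩ := (mem_maxGenEigenspace _ _ _).mp hx
  have : (⇑e)^[k] x = (⇑e)^[k] 0 := by simpa [pow_apply] using hk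
  exact (Submodule.mem_bot R).mpr (e.injective.iterate k this)

variable {K V : Type*} [Field K] [AddCommGroup V] [Module K V]

theorem maxGenEigenspace_symm_le (e : V ≃ₗ[K] V) {μ : K} (hμ : μ ≠ 0) :
    maxGenEigenspace (e.symm : End K V) μ ≤ maxGenEigenspace (e : End K V) μ⁻¹ := by
  have he : (e : End K V) * e.symm = 1 := by ext; simp
  have hcomm : Commute (e : End K V) (e.symm - μ • 1) := by
    have : Commute (e : End K V) e.symm := by
      rw [Commute, SemiconjBy, he]; ext; simp
    exact this.sub_right ((Commute.one_right _).smul_right μ)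
  have hfactor : (e : End K V) - μ⁻¹ • 1 = (-μ⁻¹) • (e * (e.symm - μ • 1)) := by
    rw [mul_sub, he, mul_smul_comm, mul_one]
    match_scalars <;> field_simp
  intro x hx
  obtain ⟨k, hk⟩ := (mem_maxGenEigenspace _ _ _).mp hx
  refine (mem_maxGenEigenspace _ _ _).mpr ⟨k, ?_⟩
  rw [hfactor, smul_pow, hcomm.mul_pow]
  simp [mul_apply, hk]

theorem maxGenEigenspace_symm (e : V ≃ₗ[K] V) {μ : K} (hμ : μ ≠ 0) :
    maxGenEigenspace (e.symm : End K V) μ = maxGenEigenspace (e : End K V) μ⁻¹ :=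
  (maxGenEigenspace_symm_le e hμ).antisymm <| by
    simpa using maxGenEigenspace_symm_le e.symm (inv_ne_zero hμ)

theorem iSup_maxGenEigenspace_ne_top {f : End K V} {p : K → Prop} {μ : K}
    (hμ : f.HasEigenvalue μ) (hpμ : ¬ p μ) :
    ⨆ (ν : K) (_ : p ν), f.maxGenEigenspace ν ≠ ⊤ := by
  intro htop
  have hle : f.maxGenEigenspace μ ≤ ⨆ (ν : K) (_ : ν ≠ μ), f.maxGenEigenspace ν :=
    le_top.trans <| htop.symm.le.trans <|
      iSup₂_mono' fun ν hν => ⟨ν, fun h => hpμ (h ▸ hν), le_rfl⟩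
  exact hasEigenvalue_iff.mp hμ <| le_bot_iff.mp <| eigenspace_le_maxGenEigenspace.trans
    ((f.independent_maxGenEigenspace μ).eq_bot_of_le hle).le

end Module.End

theorem Multiset.norm_prod_lt_one {R : Type*} [SeminormedCommRing R] {s : Multiset R}
    (hs : s ≠ 0) (h : ∀ x ∈ s, ‖x‖ < 1) : ‖s.prod‖ < 1 := by
  induction s using Multiset.induction_on with
  | empty => exact absurd rfl hs
  | cons a t ih =>
    have ha : ‖a‖ < 1 := h a (mem_cons_self a t)
    rcases eq_or_ne t 0 with rfl | ht
    · simpa using ha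
    rw [prod_cons]
    exact (norm_mul_le a t.prod).trans_lt <| mul_lt_one_of_nonneg_of_lt_one_left (norm_nonneg a) ha
      (ih ht fun x hx => h x (mem_cons_of_mem hx)).le

theorem Module.End.exists_hasEigenvalue_one_le_norm {V : Type*} [AddCommGroup V] [Module ℂ V]
    [FiniteDimensional ℂ V] [Nontrivial V] {f : End ℂ V} (hdet : 1 ≤ ‖LinearMap.det f‖) :
    ∃ μ, f.HasEigenvalue μ ∧ 1 ≤ ‖μ‖ := by
  by_contra! hsmall
  have hsplits : f.charpoly.Splits := IsAlgClosed.splits _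
  have hroots : f.charpoly.roots ≠ 0 := by
    rw [← Multiset.card_pos, ← hsplits.natDegree_eq_card_roots, LinearMap.charpoly_natDegree]
    exact Module.finrank_pos
  refine hdet.not_gt ?_
  rw [det_eq_prod_roots_charpoly_of_splits hsplits]
  exact Multiset.norm_prod_lt_one hroots fun μ hμ =>
    hsmall μ <| (hasEigenvalue_iff_isRoot_charpoly f μ).mpr (Polynomial.isRoot_of_mem_roots hμ)

section

variable {d : ℕ}

theorem unstableSubspace_conj (D : (Fin d → ℂ) ≃ₗ[ℂ] (Fin d → ℂ)) (f : Module.End ℂ (Fin d → ℂ)) :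
    unstableSubspace (D.conj f) = (unstableSubspace f).map D.toLinearMap := by
  simp only [unstableSubspace, Module.End.maxGenEigenspace_conj, Submodule.map_iSup]

theorem unstableSubspace_symm (B : (Fin d → ℂ) ≃ₗ[ℂ] (Fin d → ℂ)) :
    unstableSubspace B.symm.toLinearMap = stableSubspace B.toLinearMap := by
  refine le_antisymm (iSup₂_le fun μ hμ => ?_) (iSup₂_le fun ν hν => ?_)
  · have hμ0 : μ ≠ 0 := norm_pos_iff.mp (one_pos.trans hμ)
    rw [Module.End.maxGenEigenspace_symm B hμ0]
    exact le_iSup₂_of_le μ⁻¹ (by rw [norm_inv]; exact inv_lt_one_of_one_lt₀ hμ) le_rfl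
  · rcases eq_or_ne ν 0 with rfl | hν0
    · rw [Module.End.maxGenEigenspace_zero_eq_bot]
      exact bot_le
    rw [← inv_inv ν, ← Module.End.maxGenEigenspace_symm B (inv_ne_zero hν0)]
    refine le_iSup₂_of_le ν⁻¹ ?_ le_rfl
    rw [norm_inv]
    exact (one_lt_inv₀ (norm_pos_iff.mpr hν0)).mpr hν

theorem stableSubspace_ne_top (hd : 1 ≤ d) {f : Module.End ℂ (Fin d → ℂ)}
    (hdet : 1 ≤ ‖LinearMap.det f‖) : stableSubspace f ≠ ⊤ := by
  have : Nonempty (Fin d) := ⟨⟨0, hd⟩⟩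
  obtain ⟨μ, hμ, hμ1⟩ := Module.End.exists_hasEigenvalue_one_le_norm hdet
  exact Module.End.iSup_maxGenEigenspace_ne_top hμ hμ1.not_gt

end

theorem stmt5_general (d : ℕ) (hd : 1 ≤ d) (B D : (Fin d → ℂ) ≃ₗ[ℂ] (Fin d → ℂ))
    (hdet : ‖LinearMap.det B.toLinearMap‖ = 1) :
    (stableSubspace B.toLinearMap).map D.toLinearMap =
      unstableSubspace (D.symm.trans (B.trans D)).symm.toLinearMap ∧
    (stableSubspace B.toLinearMap).map D.toLinearMap ⊔
      unstableSubspace (D.symm.trans (B.trans D)).symm.toLinearMap ≠ ⊤ := by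
  have hC : (D.symm.trans (B.trans D)).symm.toLinearMap = D.conj B.symm.toLinearMap := rfl
  have hmap : (stableSubspace B.toLinearMap).map D.toLinearMap =
      unstableSubspace (D.symm.trans (B.trans D)).symm.toLinearMap := by
    rw [hC, unstableSubspace_conj, unstableSubspace_symm]
  refine ⟨hmap, ?_⟩
  rw [← hmap, sup_idem]
  exact Submodule.map_ne_top_iff.mpr (stableSubspace_ne_top hd hdet.ge)

/-- For hyperbolic `B` with `|det B| = 1` and `C = D B D⁻¹`, the image `D(E^s(B))` equals
`E^u(C⁻¹)`, so the sought transversality `D(E^s(B)) ⊔ E^u(C⁻¹) = ℂ^d` fails. -/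
theorem stmt5 (d : ℕ) (hd : 1 ≤ d) (B D : (Fin d → ℂ) ≃ₗ[ℂ] (Fin d → ℂ))
    (hB : IsHyperbolic B.toLinearMap) (hdet : ‖LinearMap.det B.toLinearMap‖ = 1) :
    (stableSubspace B.toLinearMap).map D.toLinearMap =
      unstableSubspace (D.symm.trans (B.trans D)).symm.toLinearMap ∧
    (stableSubspace B.toLinearMap).map D.toLinearMap ⊔
      unstableSubspace (D.symm.trans (B.trans D)).symm.toLinearMap ≠ ⊤ :=
  stmt5_general d hd B D hdet
end

section
/- Let c̄ > 0, T ≥ 0, and let σ, c : [0,T] → ℝ be continuous functions with σ(t) > 0 and 0 ≤ c(t) ≤ c̄ for all t ∈ [0,T]. Let w = (w₁, w₂) : [0,T] → ℝ² be differentiable and satisfy the linear system w₁′(t) = −σ(t)·w₁(t) − c(t)·w₂(t) and w₂′(t) = w₂(t) for all t ∈ [0,T]. If w₂(0) > 0 and |w₁(0)| ≤ c̄·w₂(0), then for every t ∈ [0,T] one has w₂(t) > 0 and |w₁(t)| ≤ c̄·w₂(t). -/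
/-!
Both cone inequalities `c̄ w₂ ∓ w₁ ≥ 0` are barrier arguments: on the boundary `c̄ w₂ = ± w₁` of
the cone the derivative of `c̄ w₂ ∓ w₁` equals `(c̄ ± c + σ c̄) w₂ ≥ σ c̄ w₂ > 0`, since `|c| ≤ c̄`
and `w₂ = w₂(0) eᵗ > 0`. So these functions can never cross zero.
-/

open Set Real

section Icc

variable {a b : ℝ}

lemma HasDerivWithinAt.Ici_of_Icc {f : ℝ → ℝ} {f' x : ℝ}
    (hf : HasDerivWithinAt f f' (Icc a b) x) (hx : x ∈ Ico a b) :
    HasDerivWithinAt f f' (Ici x) x :=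
  hf.mono_of_mem_nhdsWithin (Icc_mem_nhdsGE_of_mem hx)

lemma eq_mul_exp_of_hasDerivWithinAt_self {w : ℝ → ℝ}
    (hw : ∀ x ∈ Icc a b, HasDerivWithinAt w (w x) (Icc a b) x) :
    ∀ x ∈ Icc a b, w x = w a * exp (x - a) := by
  have hderiv : ∀ x ∈ Icc a b,
      HasDerivWithinAt (fun x => w x * exp (-(x - a))) 0 (Icc a b) x := by
    intro x hx
    have hexp : HasDerivAt (fun x => exp (-(x - a))) (exp (-(x - a)) * -1) x := by
      simpa using ((hasDerivAt_id x).sub_const a).neg.exp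
    exact ((hw x hx).mul hexp.hasDerivWithinAt).congr_deriv (by ring)
  have hconst := constant_of_has_deriv_right_zero
    (fun x hx => (hderiv x hx).continuousWithinAt)
    (fun x hx => (hderiv x (Ico_subset_Icc_self hx)).Ici_of_Icc hx)
  intro x hx
  have hx' := hconst x hx
  simp only [sub_self, neg_zero, exp_zero, mul_one] at hx'
  rw [← hx', mul_assoc, ← exp_add]
  simp

lemma nonneg_of_hasDerivWithinAt_of_eq_zero {F F' : ℝ → ℝ}
    (hF : ∀ x ∈ Icc a b, HasDerivWithinAt F (F' x) (Icc a b) x) (ha : 0 ≤ F a)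
    (hbd : ∀ x ∈ Ico a b, F x = 0 → 0 < F' x) :
    ∀ x ∈ Icc a b, 0 ≤ F x :=
  image_le_of_deriv_right_lt_deriv_boundary' continuousOn_const
    (fun x _ => hasDerivWithinAt_const x _ (0 : ℝ)) ha
    (fun x hx => (hF x hx).continuousWithinAt)
    (fun x hx => (hF x (Ico_subset_Icc_self hx)).Ici_of_Icc hx)
    (fun x hx hx0 => hbd x hx hx0.symm)

end Icc

lemma cone_boundary_deriv_pos {cbar σ c ε w₁ w₂ : ℝ} (hcbar : 0 < cbar) (hσ : 0 < σ)
    (hc0 : 0 ≤ c) (hc1 : c ≤ cbar) (hε : |ε| ≤ 1) (hw₂ : 0 < w₂)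
    (hboundary : cbar * w₂ - ε * w₁ = 0) :
    0 < cbar * w₂ - ε * (-σ * w₁ - c * w₂) := by
  have hεc : 0 ≤ cbar + ε * c := by nlinarith [abs_le.mp hε]
  calc 0 < (cbar + ε * c) * w₂ + σ * cbar * w₂ := by positivity
    _ = cbar * w₂ - ε * (-σ * w₁ - c * w₂) := by linear_combination σ * hboundary

theorem stmt7_general (cbar : ℝ) (hcbar : 0 < cbar) (T : ℝ)
    (σ c : ℝ → ℝ)
    (hσ : ∀ t ∈ Set.Icc 0 T, 0 < σ t)
    (hc0 : ∀ t ∈ Set.Icc 0 T, 0 ≤ c t) (hc1 : ∀ t ∈ Set.Icc 0 T, c t ≤ cbar)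
    (w₁ w₂ : ℝ → ℝ)
    (hw₁ : ∀ t ∈ Set.Icc 0 T,
      HasDerivWithinAt w₁ (-σ t * w₁ t - c t * w₂ t) (Set.Icc 0 T) t)
    (hw₂ : ∀ t ∈ Set.Icc 0 T, HasDerivWithinAt w₂ (w₂ t) (Set.Icc 0 T) t)
    (h0 : 0 < w₂ 0) (hcone : |w₁ 0| ≤ cbar * w₂ 0) :
    ∀ t ∈ Set.Icc 0 T, 0 < w₂ t ∧ |w₁ t| ≤ cbar * w₂ t := by
  have hw₂pos : ∀ t ∈ Icc 0 T, 0 < w₂ t := fun t ht => by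
    rw [eq_mul_exp_of_hasDerivWithinAt_self hw₂ t ht]
    positivity
  have hside : ∀ ε : ℝ, |ε| ≤ 1 → ∀ t ∈ Icc 0 T, 0 ≤ cbar * w₂ t - ε * w₁ t := by
    intro ε hε
    have hstart : 0 ≤ cbar * w₂ 0 - ε * w₁ 0 := by
      nlinarith [abs_le.mp hε, abs_le.mp hcone]
    refine nonneg_of_hasDerivWithinAt_of_eq_zero
      (fun t ht => ((hw₂ t ht).const_mul cbar).sub ((hw₁ t ht).const_mul ε)) hstart ?_
    intro t ht hboundary
    have ht' := Ico_subset_Icc_self ht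
    exact cone_boundary_deriv_pos hcbar (hσ t ht') (hc0 t ht') (hc1 t ht') hε (hw₂pos t ht')
      hboundary
  intro t ht
  refine ⟨hw₂pos t ht, abs_le.mpr ⟨?_, ?_⟩⟩
  · linarith [hside (-1) (by norm_num) t ht]
  · linarith [hside 1 (by norm_num) t ht]

/-- Invariance of the unstable cone `{(a,b) : |a| ≤ c̄·b, b > 0}` under the derivative
cocycle `w₁' = -σ w₁ - c w₂`, `w₂' = w₂` of the DA flow. -/
theorem stmt7 (cbar : ℝ) (hcbar : 0 < cbar) (T : ℝ) (hT : 0 ≤ T)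
    (σ c : ℝ → ℝ)
    (hσcont : ContinuousOn σ (Set.Icc 0 T)) (hccont : ContinuousOn c (Set.Icc 0 T))
    (hσ : ∀ t ∈ Set.Icc 0 T, 0 < σ t)
    (hc0 : ∀ t ∈ Set.Icc 0 T, 0 ≤ c t) (hc1 : ∀ t ∈ Set.Icc 0 T, c t ≤ cbar)
    (w₁ w₂ : ℝ → ℝ)
    (hw₁ : ∀ t ∈ Set.Icc 0 T,
      HasDerivWithinAt w₁ (-σ t * w₁ t - c t * w₂ t) (Set.Icc 0 T) t)
    (hw₂ : ∀ t ∈ Set.Icc 0 T, HasDerivWithinAt w₂ (w₂ t) (Set.Icc 0 T) t)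
    (h0 : 0 < w₂ 0) (hcone : |w₁ 0| ≤ cbar * w₂ 0) :
    ∀ t ∈ Set.Icc 0 T, 0 < w₂ t ∧ |w₁ t| ≤ cbar * w₂ t :=
  stmt7_general cbar hcbar T σ c hσ hc0 hc1 w₁ w₂ hw₁ hw₂ h0 hcone
end
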